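/- arXiv:1404.3146 — 4 statements merged into one kernel-verified Lean document; each statement's English description precedes it below -/
import Mathlib

section
/- \widetilde{SI}(X:(Y,Y');Z) \ge \widetilde{SI}(X:Y;Z): the shared information does not decrease when one of the right arguments is enlarged. -/
open scoped BigOperators Classical

noncomputable section

/-- Shannon entropy (in bits) of a distribution on a finite type. -/
def ent {A : Type*} [Fintype A] (q : A → ℝ) : ℝ :=
  -∑ a, q a * Real.logb 2 (q a)

def ent2 {A B : Type*} [Fintype A] [Fintype B] (q : A → B → ℝ) : ℝ :=
  ent (fun p : A × B => q p.1 p.2)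

def ent3 {A B C : Type*} [Fintype A] [Fintype B] [Fintype C] (q : A → B → C → ℝ) : ℝ :=
  ent (fun p : A × B × C => q p.1 p.2.1 p.2.2)

/-- Mutual information MI(A:B) (in bits) of a joint distribution `q`. -/
def MI {A B : Type*} [Fintype A] [Fintype B] (q : A → B → ℝ) : ℝ :=
  ent (fun a => ∑ b, q a b) + ent (fun b => ∑ a, q a b) - ent2 q

/-- Conditional mutual information MI(A:B|C) of a joint distribution `q` of (A,B,C):
`MI(A:B|C) = H(A,C) + H(B,C) - H(C) - H(A,B,C)`. -/
def CMI {A B C : Type*} [Fintype A] [Fintype B] [Fintype C] (q : A → B → C → ℝ) : ℝ :=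
  ent2 (fun a c => ∑ b, q a b c) + ent2 (fun b c => ∑ a, q a b c)
    - ent (fun c => ∑ a, ∑ b, q a b c) - ent3 q

/-- Coinformation CoI(A;B;C) = MI(A:B) - MI(A:B|C). -/
def CoI {A B C : Type*} [Fintype A] [Fintype B] [Fintype C] (q : A → B → C → ℝ) : ℝ :=
  MI (fun a b => ∑ c, q a b c) - CMI q

structure IsDist2 {A B : Type*} [Fintype A] [Fintype B] (q : A → B → ℝ) : Prop where
  nonneg : ∀ a b, 0 ≤ q a b
  sum_one : ∑ a, ∑ b, q a b = 1

structure IsDist3 {A B C : Type*} [Fintype A] [Fintype B] [Fintype C]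
    (q : A → B → C → ℝ) : Prop where
  nonneg : ∀ a b c, 0 ≤ q a b c
  sum_one : ∑ a, ∑ b, ∑ c, q a b c = 1

structure IsDist4 {A B C D : Type*} [Fintype A] [Fintype B] [Fintype C] [Fintype D]
    (q : A → B → C → D → ℝ) : Prop where
  nonneg : ∀ a b c d, 0 ≤ q a b c d
  sum_one : ∑ a, ∑ b, ∑ c, ∑ d, q a b c d = 1

structure IsDist5 {A B C D E : Type*} [Fintype A] [Fintype B] [Fintype C] [Fintype D] [Fintype E]
    (q : A → B → C → D → E → ℝ) : Prop where
  nonneg : ∀ a b c d e, 0 ≤ q a b c d e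
  sum_one : ∑ a, ∑ b, ∑ c, ∑ d, ∑ e, q a b c d e = 1

/-- Δ_P: the joint distributions of (X,Y,Z) having the same (X,Y)- and (X,Z)-marginals as P. -/
def Delta {A B C : Type*} [Fintype A] [Fintype B] [Fintype C] (p : A → B → C → ℝ) :
    Set (A → B → C → ℝ) :=
  {q | IsDist3 q ∧ (∀ a b, ∑ c, q a b c = ∑ c, p a b c)
      ∧ (∀ a c, ∑ b, q a b c = ∑ b, p a b c)}

/-- MI(X:(Y,Z)). -/
def MIpair {A B C : Type*} [Fintype A] [Fintype B] [Fintype C] (q : A → B → C → ℝ) : ℝ :=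
  MI (fun a (p : B × C) => q a p.1 p.2)

/-- The unique information UI~(X : Y \ Z) = min over Δ_P of MI_Q(X:Y|Z). -/
def UI {A B C : Type*} [Fintype A] [Fintype B] [Fintype C] (p : A → B → C → ℝ) : ℝ :=
  sInf (CMI '' Delta p)

/-- The unique information UI~(X : Z \ Y) = min over Δ_P of MI_Q(X:Z|Y). -/
def UIr {A B C : Type*} [Fintype A] [Fintype B] [Fintype C] (p : A → B → C → ℝ) : ℝ :=
  sInf ((fun q => CMI (fun a c b => q a b c)) '' Delta p)

/-- The shared information SI~(X : Y ; Z) = max over Δ_P of CoI_Q(X;Y;Z). -/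
def SI {A B C : Type*} [Fintype A] [Fintype B] [Fintype C] (p : A → B → C → ℝ) : ℝ :=
  sSup (CoI '' Delta p)

/-- The complementary information CI~(X : Y ; Z) = MI_P(X:(Y,Z)) - min over Δ_P of MI_Q(X:(Y,Z)). -/
def CI {A B C : Type*} [Fintype A] [Fintype B] [Fintype C] (p : A → B → C → ℝ) : ℝ :=
  MIpair p - sInf (MIpair '' Delta p)

lemma sum3_cycle {α β γ : Type*} [Fintype α] [Fintype β] [Fintype γ] (f : α → β → γ → ℝ) :
    ∑ a, ∑ b, ∑ c, f a b c = ∑ b, ∑ c, ∑ a, f a b c := by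
  rw [Finset.sum_comm]
  exact Finset.sum_congr rfl fun b _ => Finset.sum_comm

lemma sum4_cycle {α β γ δ : Type*} [Fintype α] [Fintype β] [Fintype γ] [Fintype δ]
    (f : α → β → γ → δ → ℝ) :
    ∑ a, ∑ b, ∑ c, ∑ d, f a b c d = ∑ b, ∑ c, ∑ d, ∑ a, f a b c d := by
  rw [Finset.sum_comm]
  exact Finset.sum_congr rfl fun b _ => sum3_cycle _

lemma gibbs {x g : ℝ} (hx : 0 < x) (hg : 0 < g) : x - g ≤ x * Real.log (x / g) := by
  have h1 : Real.log (g / x) ≤ g / x - 1 := Real.log_le_sub_one_of_pos (by positivity)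
  have h2 : Real.log (x / g) = - Real.log (g / x) := by
    rw [← Real.log_inv, inv_div]
  rw [h2]
  have h3 := mul_le_mul_of_nonneg_left h1 hx.le
  have hgx : x * (g / x - 1) = g - x := by field_simp
  nlinarith

lemma log_two_pos : (0:ℝ) < Real.log 2 := Real.log_pos one_lt_two

lemma cmi_nonneg {Y Y' Z : Type*} [Fintype Y] [Fintype Y'] [Fintype Z]
    (r : Y → Y' → Z → ℝ) (hr : ∀ y y' z, 0 ≤ r y y' z) :
    0 ≤ ∑ y, ∑ y', ∑ z, r y y' z *
      (Real.logb 2 (r y y' z) + Real.logb 2 (∑ b, ∑ c, r y b c)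
        - Real.logb 2 (∑ c, r y y' c) - Real.logb 2 (∑ b, r y b z)) := by
  apply Finset.sum_nonneg
  intro y _
  by_cases hR0 : (∑ b, ∑ c, r y b c) = 0
  · have hz : ∀ y' z, r y y' z = 0 := by
      intro y' z
      have h1 : ∑ c, r y y' c = 0 :=
        (Finset.sum_eq_zero_iff_of_nonneg
          (fun b _ => Finset.sum_nonneg fun c _ => hr y b c)).mp hR0 y' (Finset.mem_univ _)
      exact (Finset.sum_eq_zero_iff_of_nonneg (fun c _ => hr y y' c)).mp h1 z (Finset.mem_univ _)
    simp [hz]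
  · have hRpos : 0 < ∑ b, ∑ c, r y b c :=
      lt_of_le_of_ne (Finset.sum_nonneg fun b _ => Finset.sum_nonneg fun c _ => hr y b c)
        (Ne.symm hR0)
    set R := ∑ b, ∑ c, r y b c with hRdef
    set g : Y' → Z → ℝ := fun y' z => (∑ c, r y y' c) * (∑ b, r y b z) / R with hgdef
    have hgnn : ∀ y' z, 0 ≤ g y' z := fun y' z =>
      div_nonneg (mul_nonneg (Finset.sum_nonneg fun c _ => hr y y' c)
        (Finset.sum_nonneg fun b _ => hr y b z)) hRpos.le
    have hpt : ∀ y' z, (r y y' z - g y' z) / Real.log 2 ≤ r y y' z *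
        (Real.logb 2 (r y y' z) + Real.logb 2 R
          - Real.logb 2 (∑ c, r y y' c) - Real.logb 2 (∑ b, r y b z)) := by
      intro y' z
      rcases eq_or_lt_of_le (hr y y' z) with h0 | hpos
      · rw [← h0]
        simp only [zero_mul, zero_sub]
        apply div_nonpos_of_nonpos_of_nonneg (by linarith [hgnn y' z]) log_two_pos.le
      · have hS1 : 0 < ∑ c, r y y' c :=
          lt_of_lt_of_le hpos (Finset.single_le_sum (fun c _ => hr y y' c) (Finset.mem_univ z))
        have hS2 : 0 < ∑ b, r y b z :=
          lt_of_lt_of_le hpos (Finset.single_le_sum (fun b _ => hr y b z) (Finset.mem_univ y'))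
        have hgpos : 0 < g y' z := div_pos (mul_pos hS1 hS2) hRpos
        have hlogb : Real.logb 2 (r y y' z) + Real.logb 2 R
            - Real.logb 2 (∑ c, r y y' c) - Real.logb 2 (∑ b, r y b z)
            = Real.log (r y y' z / g y' z) / Real.log 2 := by
          have harg : r y y' z / g y' z = r y y' z * R / ((∑ c, r y y' c) * (∑ b, r y b z)) := by
            rw [hgdef]
            rw [div_div_eq_mul_div]
          rw [harg, Real.log_div (by positivity) (by positivity),
            Real.log_mul hpos.ne' hRpos.ne', Real.log_mul hS1.ne' hS2.ne']
          simp only [Real.logb]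
          ring
        rw [hlogb]
        rw [mul_div_assoc']
        apply div_le_div_of_nonneg_right ?_ log_two_pos.le
        exact gibbs hpos hgpos
    have hgsum : ∑ y', ∑ z, g y' z = R := by
      have h1 : ∀ y', ∑ z, g y' z = (∑ c, r y y' c) * (∑ z, ∑ b, r y b z) / R := by
        intro y'
        simp only [hgdef]
        rw [← Finset.sum_div, ← Finset.mul_sum]
      have h2 : (∑ z, ∑ b, r y b z) = R := Finset.sum_comm
      simp only [h1, h2]
      rw [← Finset.sum_div, ← Finset.sum_mul, ← hRdef]
      field_simp
    have hrsum : ∑ y', ∑ z, r y y' z = R := rfl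
    calc (0:ℝ) = (∑ y', ∑ z, (r y y' z - g y' z)) / Real.log 2 := by
          simp only [Finset.sum_sub_distrib]
          rw [hrsum, hgsum]
          simp
      _ ≤ _ := by
          rw [Finset.sum_div]
          apply Finset.sum_le_sum
          intro y' _
          rw [Finset.sum_div]
          exact Finset.sum_le_sum fun z _ => hpt y' z
lemma abs_mul_logb_le {x : ℝ} (h0 : 0 ≤ x) (h1 : x ≤ 1) : |x * Real.logb 2 x| ≤ 2 := by
  rcases eq_or_lt_of_le h0 with h | hpos
  · rw [← h]; norm_num
  · have hlb : x * Real.logb 2 x ≤ 0 :=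
      mul_nonpos_of_nonneg_of_nonpos h0 (Real.logb_nonpos one_lt_two h0 h1)
    have hinv : Real.log x⁻¹ ≤ x⁻¹ - 1 := Real.log_le_sub_one_of_pos (by positivity)
    rw [Real.log_inv] at hinv
    have h2 : -(x * Real.log x) ≤ 1 := by
      have := mul_le_mul_of_nonneg_left hinv h0
      have hx1 : x * x⁻¹ = 1 := mul_inv_cancel₀ hpos.ne'
      nlinarith
    have hl2 : (0.6931471803 : ℝ) < Real.log 2 := Real.log_two_gt_d9
    have heq : x * Real.logb 2 x = x * Real.log x / Real.log 2 := by
      rw [Real.logb]; ring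
    rw [abs_of_nonpos hlb, heq, ← neg_div]
    rw [div_le_iff₀ (by linarith : (0:ℝ) < Real.log 2)]
    nlinarith

lemma ent_abs_le {A : Type*} [Fintype A] (f : A → ℝ) (h0 : ∀ a, 0 ≤ f a) (h1 : ∀ a, f a ≤ 1) :
    |ent f| ≤ 2 * (Fintype.card A : ℝ) := by
  rw [ent, abs_neg]
  calc |∑ a, f a * Real.logb 2 (f a)| ≤ ∑ a, |f a * Real.logb 2 (f a)| :=
        Finset.abs_sum_le_sum_abs _ _
    _ ≤ ∑ _a : A, (2:ℝ) := Finset.sum_le_sum fun a _ => abs_mul_logb_le (h0 a) (h1 a)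
    _ = 2 * (Fintype.card A : ℝ) := by
        rw [Finset.sum_const, Finset.card_univ, nsmul_eq_mul]; ring

lemma coI_le_bound {A B C : Type*} [Fintype A] [Fintype B] [Fintype C]
    (q : A → B → C → ℝ) (hq : IsDist3 q) :
    CoI q ≤ 2 * (Fintype.card A : ℝ) + 2 * (Fintype.card B : ℝ)
      + 2 * (Fintype.card (A × B) : ℝ) + 2 * (Fintype.card (A × C) : ℝ)
      + 2 * (Fintype.card (B × C) : ℝ) + 2 * (Fintype.card C : ℝ)
      + 2 * (Fintype.card (A × B × C) : ℝ) := by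
  have hnn := hq.nonneg
  -- basic marginal bounds
  have h_a : ∀ a, ∑ b, ∑ c, q a b c ≤ 1 := by
    intro a
    rw [← hq.sum_one]
    exact Finset.single_le_sum
      (f := fun a => ∑ b, ∑ c, q a b c)
      (fun i _ => Finset.sum_nonneg fun b _ => Finset.sum_nonneg fun c _ => hnn i b c)
      (Finset.mem_univ a)
  have h_ab : ∀ a b, ∑ c, q a b c ≤ 1 := by
    intro a b
    refine le_trans ?_ (h_a a)
    exact Finset.single_le_sum (f := fun b => ∑ c, q a b c)
      (fun i _ => Finset.sum_nonneg fun c _ => hnn a i c) (Finset.mem_univ b)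
  have h_abc : ∀ a b c, q a b c ≤ 1 := by
    intro a b c
    refine le_trans ?_ (h_ab a b)
    exact Finset.single_le_sum (fun i _ => hnn a b i) (Finset.mem_univ c)
  have h_b : ∀ b, ∑ a, ∑ c, q a b c ≤ 1 := by
    intro b
    rw [← hq.sum_one]
    refine Finset.sum_le_sum fun a _ => ?_
    exact Finset.single_le_sum (f := fun b => ∑ c, q a b c)
      (fun i _ => Finset.sum_nonneg fun c _ => hnn a i c) (Finset.mem_univ b)
  have h_c : ∀ c, ∑ a, ∑ b, q a b c ≤ 1 := by
    intro c
    rw [← hq.sum_one]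
    refine Finset.sum_le_sum fun a _ => Finset.sum_le_sum fun b _ => ?_
    exact Finset.single_le_sum (fun i _ => hnn a b i) (Finset.mem_univ c)
  have h_ac : ∀ a c, ∑ b, q a b c ≤ 1 := by
    intro a c
    refine le_trans ?_ (h_a a)
    exact Finset.sum_le_sum fun b _ =>
      Finset.single_le_sum (fun i _ => hnn a b i) (Finset.mem_univ c)
  have h_bc : ∀ b c, ∑ a, q a b c ≤ 1 := by
    intro b c
    refine le_trans ?_ (h_b b)
    exact Finset.sum_le_sum fun a _ =>
      Finset.single_le_sum (fun i _ => hnn a b i) (Finset.mem_univ c)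
  have e1 : |ent fun a => ∑ b, ∑ c, q a b c| ≤ 2 * (Fintype.card A : ℝ) :=
    ent_abs_le _ (fun a => Finset.sum_nonneg fun b _ => Finset.sum_nonneg fun c _ => hnn a b c)
      h_a
  have e2 : |ent fun b => ∑ a, ∑ c, q a b c| ≤ 2 * (Fintype.card B : ℝ) :=
    ent_abs_le _ (fun b => Finset.sum_nonneg fun a _ => Finset.sum_nonneg fun c _ => hnn a b c)
      h_b
  have e3 : |ent2 fun a b => ∑ c, q a b c| ≤ 2 * (Fintype.card (A × B) : ℝ) := by
    rw [ent2]
    exact ent_abs_le _ (fun p => Finset.sum_nonneg fun c _ => hnn p.1 p.2 c)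
      (fun p => h_ab p.1 p.2)
  have e4 : |ent2 fun a c => ∑ b, q a b c| ≤ 2 * (Fintype.card (A × C) : ℝ) := by
    rw [ent2]
    exact ent_abs_le _ (fun p => Finset.sum_nonneg fun b _ => hnn p.1 b p.2)
      (fun p => h_ac p.1 p.2)
  have e5 : |ent2 fun b c => ∑ a, q a b c| ≤ 2 * (Fintype.card (B × C) : ℝ) := by
    rw [ent2]
    exact ent_abs_le _ (fun p => Finset.sum_nonneg fun a _ => hnn a p.1 p.2)
      (fun p => h_bc p.1 p.2)
  have e6 : |ent fun c => ∑ a, ∑ b, q a b c| ≤ 2 * (Fintype.card C : ℝ) :=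
    ent_abs_le _ (fun c => Finset.sum_nonneg fun a _ => Finset.sum_nonneg fun b _ => hnn a b c)
      h_c
  have e7 : |ent3 q| ≤ 2 * (Fintype.card (A × B × C) : ℝ) := by
    rw [ent3]
    exact ent_abs_le _ (fun p => hnn p.1 p.2.1 p.2.2) (fun p => h_abc p.1 p.2.1 p.2.2)
  rw [CoI, MI, CMI]
  have a1 := abs_le.mp e1
  have a2 := abs_le.mp e2
  have a3 := abs_le.mp e3
  have a4 := abs_le.mp e4
  have a5 := abs_le.mp e5
  have a6 := abs_le.mp e6
  have a7 := abs_le.mp e7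
  obtain ⟨l1, u1⟩ := a1; obtain ⟨l2, u2⟩ := a2; obtain ⟨l3, u3⟩ := a3
  obtain ⟨l4, u4⟩ := a4; obtain ⟨l5, u5⟩ := a5; obtain ⟨l6, u6⟩ := a6
  obtain ⟨l7, u7⟩ := a7
  linarith
lemma sum3_rev {α β γ : Type*} [Fintype α] [Fintype β] [Fintype γ] (f : α → β → γ → ℝ) :
    ∑ a, ∑ b, ∑ c, f a b c = ∑ c, ∑ b, ∑ a, f a b c := by
  calc ∑ a, ∑ b, ∑ c, f a b c = ∑ a, ∑ c, ∑ b, f a b c :=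
        Finset.sum_congr rfl fun a _ => Finset.sum_comm
    _ = ∑ c, ∑ a, ∑ b, f a b c := Finset.sum_comm
    _ = ∑ c, ∑ b, ∑ a, f a b c := Finset.sum_congr rfl fun c _ => Finset.sum_comm
lemma key {X Y Y' Z : Type*} [Fintype X] [Fintype Y] [Fintype Y'] [Fintype Z]
    (s : X → Y → Y' → Z → ℝ) (hs : ∀ x y y' z, 0 ≤ s x y y' z)
    (hind : ∀ x y y' z,
      s x y y' z * (∑ c, ∑ b, s x y b c) = (∑ c, s x y y' c) * (∑ b, s x y b z)) :
    CoI (fun x y z => ∑ y', s x y y' z) ≤ CoI (fun x (b : Y × Y') z => s x b.1 b.2 z) := by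
  rw [← sub_nonneg]
  simp only [CoI, MI, CMI]
  -- cancellation lemmas
  have hT1 : (ent fun a : X => ∑ b : Y × Y', ∑ z, s a b.1 b.2 z)
      = ent fun a : X => ∑ y, ∑ z, ∑ y', s a y y' z := by
    congr 1; funext a
    rw [Fintype.sum_prod_type]
    exact Finset.sum_congr rfl fun y _ => Finset.sum_comm
  have hT4 : (ent2 fun (a : X) (c : Z) => ∑ b : Y × Y', s a b.1 b.2 c)
      = ent2 fun (a : X) (c : Z) => ∑ y, ∑ y', s a y y' c := by
    congr 1; funext a c
    rw [Fintype.sum_prod_type]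
  have hT6 : (ent fun c : Z => ∑ x, ∑ b : Y × Y', s x b.1 b.2 c)
      = ent fun c : Z => ∑ x, ∑ y, ∑ y', s x y y' c := by
    congr 1; funext c
    exact Finset.sum_congr rfl fun x _ => Fintype.sum_prod_type _
  -- canonical-form lemmas
  have hT2 : (ent fun b : Y × Y' => ∑ x, ∑ z, s x b.1 b.2 z)
      = -∑ y, ∑ y', ∑ z, ∑ x, s x y y' z * Real.logb 2 (∑ x', ∑ z', s x' y y' z') := by
    simp only [ent, Fintype.sum_prod_type, Finset.sum_mul]
    congr 1
    refine Finset.sum_congr rfl fun y _ => Finset.sum_congr rfl fun y' _ => Finset.sum_comm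
  have hT3 : (ent2 fun (a : X) (b : Y × Y') => ∑ z, s a b.1 b.2 z)
      = -∑ y, ∑ y', ∑ z, ∑ x, s x y y' z * Real.logb 2 (∑ c, s x y y' c) := by
    simp only [ent2, ent, Fintype.sum_prod_type, Finset.sum_mul]
    congr 1
    exact sum4_cycle _
  have hT5 : (ent2 fun (b : Y × Y') (c : Z) => ∑ x, s x b.1 b.2 c)
      = -∑ y, ∑ y', ∑ z, ∑ x, s x y y' z * Real.logb 2 (∑ x', s x' y y' z) := by
    simp only [ent2, ent, Fintype.sum_prod_type, Finset.sum_mul]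
  have hT7 : (ent3 fun (x : X) (b : Y × Y') (z : Z) => s x b.1 b.2 z)
      = -∑ y, ∑ y', ∑ z, ∑ x, s x y y' z * Real.logb 2 (s x y y' z) := by
    simp only [ent3, ent, Fintype.sum_prod_type]
    congr 1
    exact sum4_cycle _
  have hU2 : (ent fun b : Y => ∑ x, ∑ z, ∑ y', s x b y' z)
      = -∑ y, ∑ y', ∑ z, ∑ x, s x y y' z
          * Real.logb 2 (∑ x', ∑ z', ∑ y'', s x' y y'' z') := by
    simp only [ent, Finset.sum_mul]
    congr 1
    exact Finset.sum_congr rfl fun y _ => sum3_rev _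
  have hU3 : (ent2 fun (a : X) (b : Y) => ∑ z, ∑ y', s a b y' z)
      = -∑ y, ∑ y', ∑ z, ∑ x, s x y y' z * Real.logb 2 (∑ z', ∑ y'', s x y y'' z') := by
    simp only [ent2, ent, Fintype.sum_prod_type, Finset.sum_mul]
    congr 1
    rw [Finset.sum_comm]
    exact Finset.sum_congr rfl fun y _ => sum3_rev _
  have hU5 : (ent2 fun (b : Y) (c : Z) => ∑ x, ∑ y', s x b y' c)
      = -∑ y, ∑ y', ∑ z, ∑ x, s x y y' z * Real.logb 2 (∑ x', ∑ y'', s x' y y'' z) := by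
    simp only [ent2, ent, Fintype.sum_prod_type, Finset.sum_mul]
    congr 1
    exact Finset.sum_congr rfl fun y _ => (sum3_cycle _).symm
  have hU7 : (ent3 fun (x : X) (y : Y) (z : Z) => ∑ y', s x y y' z)
      = -∑ y, ∑ y', ∑ z, ∑ x, s x y y' z * Real.logb 2 (∑ y'', s x y y'' z) := by
    simp only [ent3, ent, Fintype.sum_prod_type, Finset.sum_mul]
    congr 1
    rw [Finset.sum_comm]
    exact Finset.sum_congr rfl fun y _ => sum3_rev _
  rw [hT1, hT4, hT6, hT2, hT3, hT5, hT7, hU2, hU3, hU5, hU7]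
  -- the master sum
  have main : 0 ≤ ∑ y, ∑ y', ∑ z, ∑ x, s x y y' z *
      (Real.logb 2 (∑ c, s x y y' c)
        + Real.logb 2 (∑ y'', s x y y'' z)
        - Real.logb 2 (s x y y' z)
        - Real.logb 2 (∑ z', ∑ y'', s x y y'' z')
        + (Real.logb 2 (∑ x', s x' y y' z)
            + Real.logb 2 (∑ x', ∑ z', ∑ y'', s x' y y'' z')
            - Real.logb 2 (∑ x', ∑ z', s x' y y' z')
            - Real.logb 2 (∑ x', ∑ y'', s x' y y'' z))) := by
    have hx : ∀ y y' z, (∑ x, s x y y' z *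
        (Real.logb 2 (∑ c, s x y y' c)
          + Real.logb 2 (∑ y'', s x y y'' z)
          - Real.logb 2 (s x y y' z)
          - Real.logb 2 (∑ z', ∑ y'', s x y y'' z')
          + (Real.logb 2 (∑ x', s x' y y' z)
              + Real.logb 2 (∑ x', ∑ z', ∑ y'', s x' y y'' z')
              - Real.logb 2 (∑ x', ∑ z', s x' y y' z')
              - Real.logb 2 (∑ x', ∑ y'', s x' y y'' z))))
        = (∑ x, s x y y' z) *
          (Real.logb 2 (∑ x', s x' y y' z)
            + Real.logb 2 (∑ x', ∑ z', ∑ y'', s x' y y'' z')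
            - Real.logb 2 (∑ x', ∑ z', s x' y y' z')
            - Real.logb 2 (∑ x', ∑ y'', s x' y y'' z)) := by
      intro y y' z
      rw [Finset.sum_mul]
      refine Finset.sum_congr rfl fun x _ => ?_
      rcases eq_or_lt_of_le (hs x y y' z) with h0 | hpos
      · rw [← h0]; ring
      · have hA1 : 0 < ∑ c, s x y y' c :=
          lt_of_lt_of_le hpos (Finset.single_le_sum (fun c _ => hs x y y' c) (Finset.mem_univ z))
        have hA2 : 0 < ∑ y'', s x y y'' z :=
          lt_of_lt_of_le hpos (Finset.single_le_sum (fun b _ => hs x y b z) (Finset.mem_univ y'))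
        have hA3 : 0 < ∑ z', ∑ y'', s x y y'' z' :=
          lt_of_lt_of_le hA2 (Finset.single_le_sum
            (fun c _ => Finset.sum_nonneg fun b _ => hs x y b c) (Finset.mem_univ z))
        have hlog : Real.logb 2 (∑ c, s x y y' c) + Real.logb 2 (∑ y'', s x y y'' z)
            = Real.logb 2 (s x y y' z) + Real.logb 2 (∑ z', ∑ y'', s x y y'' z') := by
          rw [← Real.logb_mul hA1.ne' hA2.ne', ← Real.logb_mul hpos.ne' hA3.ne', ← hind x y y' z]
        have hzero : Real.logb 2 (∑ c, s x y y' c)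
            + Real.logb 2 (∑ y'', s x y y'' z)
            - Real.logb 2 (s x y y' z)
            - Real.logb 2 (∑ z', ∑ y'', s x y y'' z') = 0 := by linarith
        rw [show (Real.logb 2 (∑ c, s x y y' c)
          + Real.logb 2 (∑ y'', s x y y'' z)
          - Real.logb 2 (s x y y' z)
          - Real.logb 2 (∑ z', ∑ y'', s x y y'' z')
          + (Real.logb 2 (∑ x', s x' y y' z)
              + Real.logb 2 (∑ x', ∑ z', ∑ y'', s x' y y'' z')
              - Real.logb 2 (∑ x', ∑ z', s x' y y' z')
              - Real.logb 2 (∑ x', ∑ y'', s x' y y'' z)))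
          = (Real.logb 2 (∑ x', s x' y y' z)
              + Real.logb 2 (∑ x', ∑ z', ∑ y'', s x' y y'' z')
              - Real.logb 2 (∑ x', ∑ z', s x' y y' z')
              - Real.logb 2 (∑ x', ∑ y'', s x' y y'' z)) from by linarith]
    simp only [hx]
    have e2 : ∀ (y : Y) (y' : Y'), (∑ x', ∑ z', s x' y y' z') = ∑ c, ∑ x', s x' y y' c :=
      fun y y' => Finset.sum_comm
    have e3 : ∀ (y : Y) (z : Z), (∑ x', ∑ y'', s x' y y'' z) = ∑ b, ∑ x', s x' y b z :=
      fun y z => Finset.sum_comm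
    have e4 : ∀ y : Y, (∑ x', ∑ z', ∑ y'', s x' y y'' z') = ∑ b, ∑ c, ∑ x', s x' y b c :=
      fun y => sum3_rev _
    simp only [e2, e3, e4]
    exact cmi_nonneg (fun y y' z => ∑ x, s x y y' z)
      (fun y y' z => Finset.sum_nonneg fun x _ => hs x y y' z)
  have hexp : ∑ y, ∑ y', ∑ z, ∑ x, s x y y' z *
      (Real.logb 2 (∑ c, s x y y' c)
        + Real.logb 2 (∑ y'', s x y y'' z)
        - Real.logb 2 (s x y y' z)
        - Real.logb 2 (∑ z', ∑ y'', s x y y'' z')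
        + (Real.logb 2 (∑ x', s x' y y' z)
            + Real.logb 2 (∑ x', ∑ z', ∑ y'', s x' y y'' z')
            - Real.logb 2 (∑ x', ∑ z', s x' y y' z')
            - Real.logb 2 (∑ x', ∑ y'', s x' y y'' z)))
      = (∑ y, ∑ y', ∑ z, ∑ x, s x y y' z * Real.logb 2 (∑ c, s x y y' c))
        + (∑ y, ∑ y', ∑ z, ∑ x, s x y y' z * Real.logb 2 (∑ y'', s x y y'' z))
        - (∑ y, ∑ y', ∑ z, ∑ x, s x y y' z * Real.logb 2 (s x y y' z))
        - (∑ y, ∑ y', ∑ z, ∑ x, s x y y' z * Real.logb 2 (∑ z', ∑ y'', s x y y'' z'))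
        + ((∑ y, ∑ y', ∑ z, ∑ x, s x y y' z * Real.logb 2 (∑ x', s x' y y' z))
            + (∑ y, ∑ y', ∑ z, ∑ x, s x y y' z
                * Real.logb 2 (∑ x', ∑ z', ∑ y'', s x' y y'' z'))
            - (∑ y, ∑ y', ∑ z, ∑ x, s x y y' z * Real.logb 2 (∑ x', ∑ z', s x' y y' z'))
            - (∑ y, ∑ y', ∑ z, ∑ x, s x y y' z
                * Real.logb 2 (∑ x', ∑ y'', s x' y y'' z))) := by
    simp only [mul_add, mul_sub, Finset.sum_add_distrib, Finset.sum_sub_distrib]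
  rw [hexp] at main
  linarith [main]

/-- `SI~(X:(Y,Y');Z) ≥ SI~(X:Y;Z)`: the shared information does not decrease
when one of the right arguments is enlarged. -/
theorem SI_monotone_right {X Y Y' Z : Type*} [Fintype X] [Fintype Y] [Fintype Y'] [Fintype Z]
    (p' : X → Y → Y' → Z → ℝ) (hp : IsDist4 p') :
    SI (fun x (b : Y × Y') z => p' x b.1 b.2 z)
      ≥ SI (fun x y z => ∑ y', p' x y y' z) := by
  rw [ge_iff_le, SI, SI]
  -- the small marginal is itself a distribution in its own Δ
  have hps : IsDist3 (fun x y z => ∑ y', p' x y y' z) := by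
    constructor
    · intro a b c; exact Finset.sum_nonneg fun y' _ => hp.nonneg a b y' c
    · rw [← hp.sum_one]
      refine Finset.sum_congr rfl fun x _ => Finset.sum_congr rfl fun y _ => ?_
      exact Finset.sum_comm
  have hmem0 : (fun x y z => ∑ y', p' x y y' z) ∈ Delta (fun x y z => ∑ y', p' x y y' z) :=
    ⟨hps, fun a b => rfl, fun a c => rfl⟩
  have hne : (CoI '' Delta (fun x y z => ∑ y', p' x y y' z)).Nonempty :=
    ⟨_, Set.mem_image_of_mem _ hmem0⟩
  have hbdd : BddAbove (CoI '' Delta (fun x (b : Y × Y') z => p' x b.1 b.2 z)) := by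
    refine ⟨2 * (Fintype.card X : ℝ) + 2 * (Fintype.card (Y × Y') : ℝ)
      + 2 * (Fintype.card (X × Y × Y') : ℝ) + 2 * (Fintype.card (X × Z) : ℝ)
      + 2 * (Fintype.card ((Y × Y') × Z) : ℝ) + 2 * (Fintype.card Z : ℝ)
      + 2 * (Fintype.card (X × (Y × Y') × Z) : ℝ), ?_⟩
    rintro v ⟨q, hq, rfl⟩
    exact coI_le_bound q hq.1
  refine csSup_le hne ?_
  rintro v ⟨q, hq, rfl⟩
  obtain ⟨hq1, hq2, hq3⟩ := hq
  -- the coupled distribution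
  set s : X → Y → Y' → Z → ℝ := fun x y y' z =>
    q x y z * (∑ c, p' x y y' c) / (∑ b, ∑ c, p' x y b c) with hsdef
  have hDnn : ∀ x y, (0:ℝ) ≤ ∑ b, ∑ c, p' x y b c :=
    fun x y => Finset.sum_nonneg fun b _ => Finset.sum_nonneg fun c _ => hp.nonneg x y b c
  have hsnn : ∀ x y y' z, 0 ≤ s x y y' z := by
    intro x y y' z
    rw [hsdef]
    exact div_nonneg (mul_nonneg (hq1.nonneg x y z)
      (Finset.sum_nonneg fun c _ => hp.nonneg x y y' c)) (hDnn x y)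
  have hq2' : ∀ x y, ∑ z, q x y z = ∑ b, ∑ c, p' x y b c := by
    intro x y
    rw [hq2 x y]
    exact Finset.sum_comm
  have hq0 : ∀ x y, (∑ b, ∑ c, p' x y b c) = 0 → ∀ z, q x y z = 0 := by
    intro x y h z
    have h2 : ∑ z, q x y z = 0 := by rw [hq2' x y, h]
    exact (Finset.sum_eq_zero_iff_of_nonneg (fun c _ => hq1.nonneg x y c)).mp h2 z
      (Finset.mem_univ _)
  have hp0 : ∀ x y, (∑ b, ∑ c, p' x y b c) = 0 → ∀ y' z, p' x y y' z = 0 := by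
    intro x y h y' z
    have h1 : ∑ c, p' x y y' c = 0 :=
      (Finset.sum_eq_zero_iff_of_nonneg
        (fun b _ => Finset.sum_nonneg fun c _ => hp.nonneg x y b c)).mp h y' (Finset.mem_univ _)
    exact (Finset.sum_eq_zero_iff_of_nonneg (fun c _ => hp.nonneg x y y' c)).mp h1 z
      (Finset.mem_univ _)
  -- marginal over z
  have m1 : ∀ x y y', ∑ z, s x y y' z = ∑ c, p' x y y' c := by
    intro x y y'
    by_cases hD0 : (∑ b, ∑ c, p' x y b c) = 0
    · have hz := hq0 x y hD0
      have hpz := hp0 x y hD0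
      simp only [hsdef]
      rw [Finset.sum_eq_zero fun z _ => by rw [hz z]; simp,
        Finset.sum_eq_zero fun c _ => hpz y' c]
    · have step : ∑ z, s x y y' z
          = (∑ z, q x y z) * ((∑ c, p' x y y' c) / (∑ b, ∑ c, p' x y b c)) := by
        rw [Finset.sum_mul]
        exact Finset.sum_congr rfl fun z _ => by rw [hsdef]; exact mul_div_assoc _ _ _
      rw [step, hq2' x y, mul_comm, div_mul_cancel₀ _ hD0]
  -- marginal over y'
  have m2 : ∀ x y z, ∑ y', s x y y' z = q x y z := by
    intro x y z
    by_cases hD0 : (∑ b, ∑ c, p' x y b c) = 0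
    · rw [hq0 x y hD0 z]
      refine Finset.sum_eq_zero fun y' _ => ?_
      simp only [hsdef]
      rw [hq0 x y hD0 z]
      simp
    · calc ∑ y', s x y y' z
          = ∑ y', q x y z * ((∑ c, p' x y y' c) / (∑ b, ∑ c, p' x y b c)) :=
            Finset.sum_congr rfl fun y' _ => by rw [hsdef]; exact mul_div_assoc _ _ _
        _ = q x y z * ∑ y', ((∑ c, p' x y y' c) / (∑ b, ∑ c, p' x y b c)) :=
            (Finset.mul_sum _ _ _).symm
        _ = q x y z * ((∑ y', ∑ c, p' x y y' c) / (∑ b, ∑ c, p' x y b c)) := by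
            rw [Finset.sum_div]
        _ = q x y z := by rw [div_self hD0, mul_one]
  -- conditional independence identity
  have hind : ∀ x y y' z,
      s x y y' z * (∑ c, ∑ b, s x y b c) = (∑ c, s x y y' c) * (∑ b, s x y b z) := by
    intro x y y' z
    have hA3 : ∑ c, ∑ b, s x y b c = ∑ b, ∑ c, p' x y b c := by
      rw [← hq2' x y]
      exact Finset.sum_congr rfl fun c _ => m2 x y c
    rw [hA3, m1 x y y', m2 x y z]
    by_cases hD0 : (∑ b, ∑ c, p' x y b c) = 0
    · rw [hq0 x y hD0 z]
      simp only [hsdef]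
      rw [hq0 x y hD0 z]
      simp
    · simp only [hsdef]
      rw [div_mul_cancel₀ _ hD0]
      ring
  -- membership in Δ of the big distribution
  have hmem : (fun x (b : Y × Y') z => s x b.1 b.2 z)
      ∈ Delta (fun x (b : Y × Y') z => p' x b.1 b.2 z) := by
    refine ⟨⟨fun a b c => hsnn a b.1 b.2 c, ?_⟩, fun a b => m1 a b.1 b.2, ?_⟩
    · rw [← hp.sum_one]
      refine Finset.sum_congr rfl fun x _ => ?_
      rw [Fintype.sum_prod_type]
      exact Finset.sum_congr rfl fun y _ => Finset.sum_congr rfl fun y' _ => m1 x y y'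
    · intro a c
      rw [Fintype.sum_prod_type, Fintype.sum_prod_type]
      show ∑ y, ∑ y1, s a y y1 c = ∑ y, ∑ y1, p' a y y1 c
      calc ∑ y, ∑ y1, s a y y1 c = ∑ y, q a y c :=
            Finset.sum_congr rfl fun y _ => m2 a y c
        _ = ∑ y, ∑ y1, p' a y y1 c := hq3 a c
  have hkey := key s hsnn hind
  have ht : (fun x y z => ∑ y', s x y y' z) = q :=
    funext fun x => funext fun y => funext fun z => m2 x y z
  rw [ht] at hkey
  exact le_trans hkey (le_csSup hbdd (Set.mem_image_of_mem _ hmem))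

end
end

section
/- In the AND example, shared information about Z exceeds the mutual information between X and Y: \widetilde{SI}(Z:X;Y) > 0 = MI(X:Y), where X, Y are independent uniform bits and Z = X AND Y. Consequently \widetilde{SI} violates left monotonicity, since \widetilde{SI}((Z,X,Y):X;Y) = MI(X:Y) = 0 < \widetilde{SI}(Z:X;Y). -/
open scoped BigOperators Classical

noncomputable section

/-- The joint distribution of (Z, X, Y) where X, Y are independent uniform bits and
`Z = X AND Y` (target written first). -/
def pAnd : Bool → Bool → Bool → ℝ := fun t x y => if t = (x && y) then 1/4 else 0

/-- The joint distribution of ((Z,X,Y), X, Y) for the AND example. -/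
def pAndBig : (Bool × Bool × Bool) → Bool → Bool → ℝ :=
  fun t x y => if t = ((x && y), x, y) then 1/4 else 0


-- ===== auxiliary lemmas =====

lemma term_nonpos (x : ℝ) (h0 : 0 ≤ x) (h1 : x ≤ 1) : x * Real.logb 2 x ≤ 0 :=
  mul_nonpos_of_nonneg_of_nonpos h0 (Real.logb_nonpos one_lt_two h0 h1)

lemma term_bound (x : ℝ) (h0 : 0 ≤ x) : -(x * Real.logb 2 x) ≤ 2 := by
  rcases eq_or_lt_of_le h0 with h|h
  · simp [← h]
  · have hlog : Real.log x⁻¹ ≤ x⁻¹ - 1 := Real.log_le_sub_one_of_pos (by positivity)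
    rw [Real.log_inv] at hlog
    have h2 : (0.6931471803 : ℝ) < Real.log 2 := Real.log_two_gt_d9
    have hx : -(x * Real.log x) ≤ 1 := by
      have := mul_le_mul_of_nonneg_left hlog h0
      have hx1 : x * x⁻¹ = 1 := mul_inv_cancel₀ h.ne'
      nlinarith
    rw [Real.logb, div_eq_mul_inv]
    have heq : -(x * (Real.log x * (Real.log 2)⁻¹)) = (-(x * Real.log x)) * (Real.log 2)⁻¹ := by
      ring
    rw [heq]
    have hinv : (Real.log 2)⁻¹ ≤ 2 := by rw [inv_le_comm₀] <;> nlinarith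
    nlinarith [inv_pos.mpr (by nlinarith : (0:ℝ) < Real.log 2)]

lemma ent_nonneg {A : Type*} [Fintype A] (q : A → ℝ) (h0 : ∀ a, 0 ≤ q a)
    (h1 : ∀ a, q a ≤ 1) : 0 ≤ ent q := by
  have : ∑ a, q a * Real.logb 2 (q a) ≤ 0 :=
    Finset.sum_nonpos fun a _ => term_nonpos _ (h0 a) (h1 a)
  simpa [ent] using this

lemma ent_le {A : Type*} [Fintype A] (q : A → ℝ) (h0 : ∀ a, 0 ≤ q a) :
    ent q ≤ 2 * Fintype.card A := by
  have : ent q = ∑ a, -(q a * Real.logb 2 (q a)) := by simp [ent]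
  rw [this]
  calc ∑ a, -(q a * Real.logb 2 (q a)) ≤ ∑ _a : A, (2:ℝ) :=
        Finset.sum_le_sum fun a _ => term_bound _ (h0 a)
    _ = 2 * Fintype.card A := by simp [mul_comm]

section bounds
variable {A B C : Type*} [Fintype A] [Fintype B] [Fintype C] (q : A → B → C → ℝ)

lemma sumBC_le (hq : IsDist3 q) (a : A) : ∑ b, ∑ c, q a b c ≤ 1 := by
  rw [← hq.sum_one]
  exact Finset.single_le_sum (f := fun a => ∑ b, ∑ c, q a b c)
    (fun a _ => Finset.sum_nonneg fun b _ => Finset.sum_nonneg fun c _ => hq.nonneg a b c)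
    (Finset.mem_univ a)

lemma sumC_le (hq : IsDist3 q) (a : A) (b : B) : ∑ c, q a b c ≤ 1 := by
  refine le_trans ?_ (sumBC_le q hq a)
  exact Finset.single_le_sum (f := fun b => ∑ c, q a b c)
    (fun b _ => Finset.sum_nonneg fun c _ => hq.nonneg a b c) (Finset.mem_univ b)

lemma entry_le (hq : IsDist3 q) (a : A) (b : B) (c : C) : q a b c ≤ 1 := by
  refine le_trans ?_ (sumC_le q hq a b)
  exact Finset.single_le_sum (f := fun c => q a b c)
    (fun c _ => hq.nonneg a b c) (Finset.mem_univ c)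

lemma sumB_le (hq : IsDist3 q) (a : A) (c : C) : ∑ b, q a b c ≤ 1 := by
  have : ∑ b, q a b c ≤ ∑ b, ∑ c, q a b c :=
    Finset.sum_le_sum fun b _ =>
      Finset.single_le_sum (f := fun c => q a b c) (fun c _ => hq.nonneg a b c)
        (Finset.mem_univ c)
  exact this.trans (sumBC_le q hq a)

lemma sumA_le (hq : IsDist3 q) (b : B) (c : C) : ∑ a, q a b c ≤ 1 := by
  rw [← hq.sum_one]
  refine Finset.sum_le_sum fun a _ => ?_
  refine le_trans ?_ (Finset.single_le_sum (f := fun b => ∑ c, q a b c)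
    (fun b _ => Finset.sum_nonneg fun c _ => hq.nonneg a b c) (Finset.mem_univ b))
  exact Finset.single_le_sum (f := fun c => q a b c) (fun c _ => hq.nonneg a b c)
    (Finset.mem_univ c)

lemma sumAB_le (hq : IsDist3 q) (c : C) : ∑ a, ∑ b, q a b c ≤ 1 := by
  rw [← hq.sum_one]
  refine Finset.sum_le_sum fun a _ => Finset.sum_le_sum fun b _ => ?_
  exact Finset.single_le_sum (f := fun c => q a b c) (fun c _ => hq.nonneg a b c)
    (Finset.mem_univ c)

lemma sumAC_le (hq : IsDist3 q) (b : B) : ∑ a, ∑ c, q a b c ≤ 1 := by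
  rw [← hq.sum_one]
  refine Finset.sum_le_sum fun a _ => ?_
  exact Finset.single_le_sum (f := fun b => ∑ c, q a b c)
    (fun b _ => Finset.sum_nonneg fun c _ => hq.nonneg a b c) (Finset.mem_univ b)

lemma CoI_le_of (hq : IsDist3 q) :
    CoI q ≤ 2 * Fintype.card A + 2 * Fintype.card B + 2 * Fintype.card C
      + 2 * Fintype.card (A × B × C) := by
  have hA : ent (fun a : A => ∑ b, ∑ c, q a b c) ≤ 2 * Fintype.card A :=
    ent_le _ fun a => Finset.sum_nonneg fun b _ => Finset.sum_nonneg fun c _ => hq.nonneg a b c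
  have hB : ent (fun b : B => ∑ a, ∑ c, q a b c) ≤ 2 * Fintype.card B :=
    ent_le _ fun b => Finset.sum_nonneg fun a _ => Finset.sum_nonneg fun c _ => hq.nonneg a b c
  have hC : ent (fun c : C => ∑ a, ∑ b, q a b c) ≤ 2 * Fintype.card C :=
    ent_le _ fun c => Finset.sum_nonneg fun a _ => Finset.sum_nonneg fun b _ => hq.nonneg a b c
  have h3 : ent3 q ≤ 2 * Fintype.card (A × B × C) :=
    ent_le _ fun p => hq.nonneg _ _ _
  have hAC : 0 ≤ ent2 (fun a c => ∑ b, q a b c) :=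
    ent_nonneg _ (fun p => Finset.sum_nonneg fun b _ => hq.nonneg _ _ _)
      (fun p => sumB_le q hq _ _)
  have hBC : 0 ≤ ent2 (fun b c => ∑ a, q a b c) :=
    ent_nonneg _ (fun p => Finset.sum_nonneg fun a _ => hq.nonneg _ _ _)
      (fun p => sumA_le q hq _ _)
  have hAB : 0 ≤ ent2 (fun a b => ∑ c, q a b c) :=
    ent_nonneg _ (fun p => Finset.sum_nonneg fun c _ => hq.nonneg _ _ _)
      (fun p => sumC_le q hq _ _)
  unfold CoI MI CMI
  linarith

lemma bddAbove_CoI (p : A → B → C → ℝ) : BddAbove (CoI '' Delta p) := by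
  refine ⟨2 * Fintype.card A + 2 * Fintype.card B + 2 * Fintype.card C
      + 2 * Fintype.card (A × B × C), ?_⟩
  rintro r ⟨q, hq, rfl⟩
  exact CoI_le_of q hq.1

end bounds

-- ===== logarithm facts =====

lemma logb_half : Real.logb 2 (1/2 : ℝ) = -1 := by
  rw [show (1/2:ℝ) = 2⁻¹ by norm_num, Real.logb_inv, Real.logb_self_eq_one] <;> norm_num

lemma logb_quarter : Real.logb 2 (1/4 : ℝ) = -2 := by
  rw [show (1/4:ℝ) = ((2:ℝ)^(2:ℕ))⁻¹ by norm_num, Real.logb_inv, Real.logb_pow,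
    Real.logb_self_eq_one] <;> norm_num

lemma logb_34 : Real.logb 2 (3/4 : ℝ) = Real.logb 2 3 - 2 := by
  rw [Real.logb_div (by norm_num) (by norm_num),
    show (4:ℝ) = (2:ℝ)^(2:ℕ) by norm_num, Real.logb_pow, Real.logb_self_eq_one] <;> norm_num

lemma logb3_lt : Real.logb 2 3 < 2 := by
  have := Real.logb_lt_logb (b := 2) one_lt_two (by norm_num : (0:ℝ) < 3)
    (by norm_num : (3:ℝ) < 4)
  rw [show (4:ℝ) = 2^(2:ℕ) by norm_num, Real.logb_pow,
    Real.logb_self_eq_one (by norm_num)] at this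
  simpa using this

lemma logb3_gt : 1 < Real.logb 2 3 := by
  have := Real.logb_lt_logb (b := 2) one_lt_two (by norm_num : (0:ℝ) < 2)
    (by norm_num : (2:ℝ) < 3)
  rwa [Real.logb_self_eq_one (by norm_num)] at this

-- ===== the optimizing distribution for the AND example =====

def QQ : Bool → Bool → Bool → ℝ := fun t x y =>
  if t = false ∧ x = false ∧ y = false then 1/2
  else if x = true ∧ y = true then 1/4 else 0

lemma QQ_mem : QQ ∈ Delta pAnd := by
  refine ⟨⟨?_, ?_⟩, ?_, ?_⟩
  · intro a b c; unfold QQ; split_ifs <;> norm_num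
  · simp [QQ, Fintype.sum_bool]; norm_num
  · intro a b; cases a <;> cases b <;> simp [QQ, pAnd, Fintype.sum_bool] <;> norm_num
  · intro a c; cases a <;> cases c <;> simp [QQ, pAnd, Fintype.sum_bool] <;> norm_num

lemma CoI_QQ_pos : 0 < CoI QQ := by
  unfold CoI MI CMI ent2 ent3 ent QQ
  simp only [Fintype.sum_prod_type, Fintype.sum_bool]
  norm_num [logb_half, logb_quarter, logb_34]
  nlinarith [logb3_lt, logb3_gt]

lemma SI_pAnd_pos : 0 < SI pAnd :=
  lt_of_lt_of_le CoI_QQ_pos (le_csSup (bddAbove_CoI pAnd) ⟨QQ, QQ_mem, rfl⟩)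

-- ===== the big example: Delta is a singleton =====

set_option maxHeartbeats 1000000 in
lemma Delta_pAndBig : Delta pAndBig = {pAndBig} := by
  apply Set.eq_singleton_iff_unique_mem.mpr
  constructor
  · refine ⟨⟨?_, ?_⟩, fun _ _ => rfl, fun _ _ => rfl⟩
    · intro a b c; unfold pAndBig; split_ifs <;> norm_num
    · simp [pAndBig, Fintype.sum_prod_type, Fintype.sum_bool]
      norm_num
  · rintro q ⟨⟨hnn, _⟩, hxy, hxz⟩
    funext t x y
    rcases t with ⟨z, a, b⟩
    have h1f := hxy (z, a, b) false
    have h1t := hxy (z, a, b) true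
    have h2f := hxz (z, a, b) false
    have h2t := hxz (z, a, b) true
    simp only [pAndBig, Fintype.sum_bool] at h1f h1t h2f h2t
    have n00 := hnn (z, a, b) false false
    have n01 := hnn (z, a, b) false true
    have n10 := hnn (z, a, b) true false
    have n11 := hnn (z, a, b) true true
    cases z <;> cases a <;> cases b <;>
      (norm_num [pAndBig] at h1f h1t h2f h2t <;>
        cases x <;> cases y <;> norm_num [pAndBig] <;> linarith)

lemma CoI_pAndBig : CoI pAndBig = 0 := by
  unfold CoI MI CMI ent2 ent3 ent pAndBig
  simp only [Fintype.sum_prod_type, Fintype.sum_bool]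
  norm_num [logb_half, logb_quarter]

lemma SI_pAndBig : SI pAndBig = 0 := by
  unfold SI
  rw [Delta_pAndBig, Set.image_singleton, csSup_singleton, CoI_pAndBig]

lemma MI_marg : MI (fun x y => ∑ t, pAnd t x y) = 0 := by
  unfold MI ent2 ent pAnd
  simp only [Fintype.sum_prod_type, Fintype.sum_bool]
  norm_num [logb_half, logb_quarter]

/-- in the AND example, `SI~(Z:X;Y) > 0 = MI(X:Y)`, while
`SI~((Z,X,Y):X;Y) = MI(X:Y) = 0 < SI~(Z:X;Y)`; hence `SI~` violates left monotonicity. -/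
theorem SI_and_example :
    0 < SI pAnd ∧ MI (fun x y => ∑ t, pAnd t x y) = 0 ∧
    SI pAndBig = MI (fun x y => ∑ t, pAnd t x y) ∧ SI pAndBig < SI pAnd := by
  refine ⟨SI_pAnd_pos, MI_marg, ?_, ?_⟩
  · rw [SI_pAndBig, MI_marg]
  · rw [SI_pAndBig]; exact SI_pAnd_pos

end
end

section
/- For any pair of finite random variables (Y,Z), \widetilde{SI}((Y,Z):Y;Z) = MI(Y:Z) (the identity axiom holds for \widetilde{SI}). -/
open scoped BigOperators Classical

noncomputable section

section Aux
variable {Y Z : Type*} [Fintype Y] [Fintype Z]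

lemma ite_mul_logb (c : Prop) [Decidable c] (x : ℝ) :
    (if c then x else 0) * Real.logb 2 (if c then x else 0)
      = if c then x * Real.logb 2 x else 0 := by
  split_ifs <;> simp

lemma sum_delta (t : Y × Z) (f : Y → Z → ℝ) :
    ∑ y, ∑ z, (if t = (y, z) then f y z else 0) = f t.1 t.2 := by
  simp [Prod.ext_iff, ite_and, Finset.sum_ite_eq]

lemma marg1 (r : Y → Z → ℝ) (t : Y × Z) (y : Y) :
    ∑ z, (if t = (y, z) then r y z else 0) = if t.1 = y then r t.1 t.2 else 0 := by
  by_cases h : t.1 = y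
  · simp [Prod.ext_iff, h, ite_and]
  · simp [Prod.ext_iff, h]

lemma marg2 (r : Y → Z → ℝ) (t : Y × Z) (z : Z) :
    ∑ y, (if t = (y, z) then r y z else 0) = if t.2 = z then r t.1 t.2 else 0 := by
  by_cases h : t.2 = z
  · simp [Prod.ext_iff, h, ite_and, Finset.sum_ite_eq]
  · simp [Prod.ext_iff, h, ite_and]

end Aux

/-- for any pair of finite random variables (Y,Z),
`SI~((Y,Z):Y;Z) = MI(Y:Z)` (the identity axiom holds for `SI~`). -/
theorem SI_identity_axiom {Y Z : Type*} [Fintype Y] [Fintype Z]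
    (r : Y → Z → ℝ) (hr : IsDist2 r) :
    SI (fun (t : Y × Z) y z => if t = (y, z) then r y z else 0) = MI r := by
  classical
  set P : (Y × Z) → Y → Z → ℝ := fun t y z => if t = (y, z) then r y z else 0 with hP
  -- Delta P is the singleton {P}
  have hPdist : IsDist3 P := by
    constructor
    · intro a b c
      by_cases h : a = (b, c) <;> simp [hP, h, hr.nonneg]
    · have : ∀ t : Y × Z, ∑ y, ∑ z, P t y z = r t.1 t.2 := fun t => sum_delta t r
      simp only [this]
      rw [Fintype.sum_prod_type]
      exact hr.sum_one
  have hDelta : Delta P = {P} := by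
    apply Set.eq_singleton_iff_unique_mem.mpr
    constructor
    · exact ⟨hPdist, fun _ _ => rfl, fun _ _ => rfl⟩
    · rintro q ⟨hq, hq1, hq2⟩
      funext t y z
      have hq1' : ∀ y, ∑ c, q t y c = if t.1 = y then r t.1 t.2 else 0 := by
        intro y; rw [hq1]; exact marg1 r t y
      have hq2' : ∀ z, ∑ b, q t b z = if t.2 = z then r t.1 t.2 else 0 := by
        intro z; rw [hq2]; exact marg2 r t z
      have hzero1 : ∀ y z, t.1 ≠ y → q t y z = 0 := by
        intro y z h
        have hs : ∑ c, q t y c = 0 := by rw [hq1', if_neg h]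
        exact (Finset.sum_eq_zero_iff_of_nonneg (fun c _ => hq.nonneg t y c)).mp hs z
          (Finset.mem_univ z)
      have hzero2 : ∀ y z, t.2 ≠ z → q t y z = 0 := by
        intro y z h
        have hs : ∑ b, q t b z = 0 := by rw [hq2', if_neg h]
        exact (Finset.sum_eq_zero_iff_of_nonneg (fun b _ => hq.nonneg t b z)).mp hs y
          (Finset.mem_univ y)
      by_cases hy : t.1 = y
      · by_cases hz : t.2 = z
        · have hsum : ∑ c, q t y c = r t.1 t.2 := by rw [hq1', if_pos hy]
          have hone : ∑ c, q t y c = q t y z := by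
            apply Finset.sum_eq_single
            · intro c _ hc
              exact hzero2 y c (by rw [hz]; exact fun h => hc h.symm)
            · intro h; exact absurd (Finset.mem_univ z) h
          have ht : t = (y, z) := Prod.ext hy hz
          have hqv : q t y z = r t.1 t.2 := by rw [← hone, hsum]
          rw [hqv, hy, hz, hP]; simp [ht]
        · have ht : t ≠ (y, z) := fun h => hz (by rw [h])
          simp [hP, ht, hzero2 y z hz]
      · have ht : t ≠ (y, z) := fun h => hy (by rw [h])
        simp [hP, ht, hzero1 y z hy]
  -- SI P = CoI P
  have hSI : SI P = CoI P := by
    rw [SI, hDelta, Set.image_singleton, csSup_singleton]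
  rw [hSI]
  -- now compute CoI P = MI r
  have hm1 : ∀ (t : Y × Z) (y : Y), ∑ z, P t y z = if t.1 = y then r t.1 t.2 else 0 :=
    fun t y => marg1 r t y
  have hm2 : ∀ (t : Y × Z) (z : Z), ∑ y, P t y z = if t.2 = z then r t.1 t.2 else 0 :=
    fun t z => marg2 r t z
  have hm12 : ∀ t : Y × Z, ∑ y, ∑ z, P t y z = r t.1 t.2 := fun t => sum_delta t r
  have hmt : ∀ (y : Y) (z : Z), ∑ t : Y × Z, P t y z = r y z := by
    intro y z
    rw [Fintype.sum_prod_type]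
    simp [hP, Prod.ext_iff, ite_and, Finset.sum_ite_eq]
  -- MI of (X, Y) marginal equals H(Y)
  have hMI1 : MI (fun (a : Y × Z) (b : Y) => ∑ c, P a b c) = ent (fun y => ∑ z, r y z) := by
    rw [MI]
    have e1 : ent (fun a : Y × Z => ∑ b, ∑ c, P a b c) = ent2 r := by
      rw [ent2]; congr 1; funext a; rw [← hm12 a]
    have e2 : ent (fun b : Y => ∑ a : Y × Z, ∑ c, P a b c) = ent (fun y => ∑ z, r y z) := by
      congr 1; funext b
      simp only [hm1]
      rw [Fintype.sum_prod_type]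
      simp [Finset.sum_ite_eq']
    have e3 : ent2 (fun (a : Y × Z) (b : Y) => ∑ c, P a b c) = ent2 r := by
      simp only [ent2, ent, hm1]
      congr 1
      rw [Fintype.sum_prod_type]
      apply Finset.sum_congr rfl
      intro a _
      simp only [ite_mul_logb]
      simp [Finset.sum_ite_eq]
    rw [e1, e2, e3]; ring
  -- CMI P = H(Y,Z) - H(Z)
  have hCMI : CMI P = ent2 r - ent (fun z => ∑ y, r y z) := by
    rw [CMI]
    have f1 : ent2 (fun (a : Y × Z) (c : Z) => ∑ b, P a b c) = ent2 r := by
      simp only [ent2, ent, hm2]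
      congr 1
      rw [Fintype.sum_prod_type]
      apply Finset.sum_congr rfl
      intro a _
      simp only [ite_mul_logb]
      simp [Finset.sum_ite_eq]
    have f2 : ent2 (fun (b : Y) (c : Z) => ∑ a : Y × Z, P a b c) = ent2 r := by
      rw [ent2, ent2]; congr 1; funext p; rw [hmt]
    have f3 : ent (fun c : Z => ∑ a : Y × Z, ∑ b : Y, P a b c)
        = ent (fun z => ∑ y, r y z) := by
      congr 1; funext c
      have : ∀ a : Y × Z, ∑ b : Y, P a b c = if a.2 = c then r a.1 a.2 else 0 :=
        fun a => hm2 a c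
      simp only [this]
      rw [Fintype.sum_prod_type]
      rw [Finset.sum_comm]
      simp [Finset.sum_ite_eq']
    have f4 : ent3 P = ent2 r := by
      simp only [ent3, ent2, ent]
      congr 1
      rw [Fintype.sum_prod_type]
      have : ∀ t : Y × Z, (∑ p : Y × Z, P t p.1 p.2 * Real.logb 2 (P t p.1 p.2))
          = r t.1 t.2 * Real.logb 2 (r t.1 t.2) := by
        intro t
        rw [Fintype.sum_prod_type]
        rw [show (∑ y, ∑ z, P t y z * Real.logb 2 (P t y z))
            = ∑ y, ∑ z, (if t = (y, z) then r y z * Real.logb 2 (r y z) else 0) from by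
          apply Finset.sum_congr rfl; intro y _
          apply Finset.sum_congr rfl; intro z _
          exact ite_mul_logb _ _]
        exact sum_delta t _
      simp only [this]
    rw [f1, f2, f3, f4]; ring
  rw [CoI, hCMI, hMI1, MI]
  ring


end
end

section
/- If X is a function of (Y,Z), then any measure of shared information SI satisfying both the identity axiom and left monotonicity must satisfy SI(X:Y;Z) \le MI(Y:Z). -/
open scoped BigOperators Classical

noncomputable section

/-- if X is a function of (Y,Z), then any measure `SI'` of shared information
(a real-valued function of joint distributions of triples of finite random variables)
satisfying the identity axiom, left monotonicity, and invariance under injective relabelings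
of its first argument, must satisfy `SI'(X:Y;Z) ≤ MI(Y:Z)`. -/
theorem SI_identity_and_left_monotonicity_bound
    (SI' : ∀ (T U V : Type) [Fintype T] [Fintype U] [Fintype V], (T → U → V → ℝ) → ℝ)
    -- identity axiom: SI'((Y,Z):Y;Z) = MI(Y:Z)
    (h_id : ∀ (U V : Type) [Fintype U] [Fintype V] (r : U → V → ℝ), IsDist2 r →
      SI' (U × V) U V (fun t u v => if t = (u, v) then r u v else 0) = MI r)
    -- left monotonicity: SI'((X,X'):Y;Z) ≥ SI'(X:Y;Z)
    (h_mono : ∀ (T T' U V : Type) [Fintype T] [Fintype T'] [Fintype U] [Fintype V]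
      (p : T → T' → U → V → ℝ), IsDist4 p →
      SI' T U V (fun t u v => ∑ t', p t t' u v)
        ≤ SI' (T × T') U V (fun t u v => p t.1 t.2 u v))
    -- invariance under (injective) relabelings of the first argument
    (h_relabel : ∀ (T T'' U V : Type) [Fintype T] [Fintype T''] [Fintype U] [Fintype V]
      (g : T → T''), Function.Injective g → ∀ (p : T → U → V → ℝ), IsDist3 p →
      SI' T'' U V (fun t'' u v => ∑ t, if g t = t'' then p t u v else 0) = SI' T U V p)
    -- the situation: X = f(Y,Z)
    {T U V : Type} [Fintype T] [Fintype U] [Fintype V]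
    (r : U → V → ℝ) (hr : IsDist2 r) (f : U → V → T) :
    SI' T U V (fun t u v => if t = f u v then r u v else 0) ≤ MI r := by
  classical
  -- the joint distribution of ((X, (Y,Z)), Y, Z)
  set q : T → (U × V) → U → V → ℝ :=
    fun t t' u v => if t' = (u, v) then (if t = f u v then r u v else 0) else 0 with hqdef
  -- the joint distribution of ((Y,Z), Y, Z)
  set p0 : (U × V) → U → V → ℝ :=
    fun t' u v => if t' = (u, v) then r u v else 0 with hp0def
  have hp0 : IsDist3 p0 := by
    constructor
    · intro a b c
      simp only [hp0def]
      split_ifs with h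
      · exact hr.nonneg b c
      · exact le_refl 0
    · have h1 : ∀ t' : U × V, ∑ u, ∑ v, p0 t' u v = r t'.1 t'.2 := by
        intro t'
        simp [hp0def, Prod.ext_iff, ite_and, Finset.sum_ite_eq]
      simp only [h1]
      rw [Fintype.sum_prod_type]
      exact hr.sum_one
  have hq4 : IsDist4 q := by
    constructor
    · intro a b c d
      simp only [hqdef]
      split_ifs with h h'
      · exact hr.nonneg c d
      · exact le_refl 0
      · exact le_refl 0
    · have : ∀ t : T, ∀ t' : U × V, ∑ u, ∑ v, q t t' u v
          = if t = f t'.1 t'.2 then r t'.1 t'.2 else 0 := by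
        intro t t'
        simp [hqdef, Prod.ext_iff, ite_and, Finset.sum_ite_eq]
      simp only [this]
      rw [Finset.sum_comm]
      have h2 : ∀ t' : U × V, ∑ t : T, (if t = f t'.1 t'.2 then r t'.1 t'.2 else 0)
          = r t'.1 t'.2 := by
        intro t'
        simp [Finset.sum_ite_eq]
      simp only [h2]
      rw [Fintype.sum_prod_type]
      exact hr.sum_one
  have hmarg : (fun t u v => if t = f u v then r u v else 0)
      = fun t u v => ∑ t', q t t' u v := by
    funext t u v
    simp [hqdef, Finset.sum_ite_eq]
  have hg : Function.Injective (fun t' : U × V => ((f t'.1 t'.2, t') : T × (U × V))) := by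
    intro a b h
    exact congrArg Prod.snd h
  have hrel := h_relabel (U × V) (T × (U × V)) U V _ hg p0 hp0
  have hrel2 : SI' (T × (U × V)) U V (fun t u v => q t.1 t.2 u v) = SI' (U × V) U V p0 := by
    rw [← hrel]
    congr 1
    funext t'' u v
    rw [Finset.sum_eq_single ((u, v) : U × V)]
    · simp only [hqdef, hp0def, if_pos rfl]
      by_cases h : t'' = ((f u v, (u, v)) : T × (U × V))
      · subst h; simp
      · have h1 : ((f u v, (u, v)) : T × (U × V)) ≠ t'' := fun hc => h hc.symm
        rw [if_neg h1]
        by_cases h2 : t''.2 = (u, v)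
        · rw [if_pos h2, if_neg]
          intro h3
          exact h (Prod.ext_iff.mpr ⟨h3, h2⟩)
        · rw [if_neg h2]
    · intro b _ hb
      simp [hp0def, hb]
    · intro hmem
      exact absurd (Finset.mem_univ _) hmem
  calc SI' T U V (fun t u v => if t = f u v then r u v else 0)
      = SI' T U V (fun t u v => ∑ t', q t t' u v) := by rw [hmarg]
    _ ≤ SI' (T × (U × V)) U V (fun t u v => q t.1 t.2 u v) := h_mono T (U × V) U V q hq4
    _ = SI' (U × V) U V p0 := hrel2
    _ = MI r := by
        have : p0 = fun t u v => if t = (u, v) then r u v else 0 := rfl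
        rw [this]; exact h_id U V r hr

end
end
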